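/- Let F = {{1,2,3},{1,4,5},{1,6,7},{2,4,7},{2,5,6},{3,4,6},{3,5,7}} and for each triple {i,j,k} ∈ F let T_{ijk} be the set of vectors in ℚ^7 whose coordinates at positions i, j, k are 0 and are each ±1 elsewhere; let T be the union of the seven sets T_{ijk}, and let K be the simple graph on T in which two distinct vectors are adjacent if and only if their squared Euclidean distance equals 16. Then K has exactly 112 vertices, exactly 56 edges, independence number 56, and chromatic number 2. -/

import Mathlib

/-!
Every vector of `T` has squared norm `4`, so by the parallelogram law
`|x - y|² + |x + y|² = 2|x|² + 2|y|² = 16` two vectors of `T` are at squared distance `16`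
exactly when `y = -x`: the graph `K` is the perfect matching `x ↔ -x`. In such a matching the
edges number half the vertices, an independent set contains at most one end of each edge, and
colouring by the sign of the first nonzero coordinate is a proper `2`-colouring whose two
classes are exchanged by `x ↦ -x`, hence both have half the vertices. Finally `|T| = 112`.
-/

/-- The graph on a set `P` of points of `ℚⁿ` where two distinct points are
adjacent iff their squared Euclidean distance equals `s`. -/
def distSqGraph {n : ℕ} (P : Set (Fin n → ℚ)) (s : ℚ) : SimpleGraph P where
  Adj x y := x ≠ y ∧ ∑ i, (x.1 i - y.1 i) ^ 2 = s
  symm := by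
    refine ⟨?_⟩
    rintro x y ⟨hne, h⟩
    refine ⟨hne.symm, ?_⟩
    rw [← h]
    exact Finset.sum_congr rfl fun i _ => by ring
  loopless := by refine ⟨?_⟩; rintro x ⟨h, -⟩; exact h rfl

/-- The family `F = {{1,2,3},{1,4,5},{1,6,7},{2,4,7},{2,5,6},{3,4,6},{3,5,7}}`
of triples from `{1,…,7}`, written with `0`-based indices. -/
def fano : Finset (Finset (Fin 7)) :=
  {{0, 1, 2}, {0, 3, 4}, {0, 5, 6}, {1, 3, 6}, {1, 4, 5}, {2, 3, 5}, {2, 4, 6}}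

/-- `S`: vectors of `ℚ⁷` that are `±2` on some triple of `F` and `0` elsewhere. -/
def Sset : Set (Fin 7 → ℚ) :=
  {x | ∃ A ∈ fano, (∀ i ∈ A, x i = 2 ∨ x i = -2) ∧ ∀ i ∉ A, x i = 0}

/-- `T`: vectors of `ℚ⁷` that are `0` on some triple of `F` and `±1` elsewhere. -/
def Tset : Set (Fin 7 → ℚ) :=
  {x | ∃ A ∈ fano, (∀ i ∈ A, x i = 0) ∧ ∀ i ∉ A, x i = 1 ∨ x i = -1}

namespace SimpleGraph

variable {V : Type*} {G : SimpleGraph V} {f : V → V}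

theorem adj_apply_of_adj_iff (hf : ∀ a b, G.Adj a b ↔ b = f a) (a : V) : G.Adj a (f a) :=
  (hf a (f a)).mpr rfl

theorem involutive_of_adj_iff (hf : ∀ a b, G.Adj a b ↔ b = f a) : Function.Involutive f :=
  fun a => ((hf _ _).mp (adj_apply_of_adj_iff hf a).symm).symm

theorem two_mul_ncard_edgeSet_of_adj_iff [Finite V] (hf : ∀ a b, G.Adj a b ↔ b = f a) :
    2 * G.edgeSet.ncard = Nat.card V := by
  classical
  have := Fintype.ofFinite V
  have hdeg : ∀ v, G.degree v = 1 := fun v =>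
    degree_eq_one_iff_existsUnique_adj.mpr ⟨f v, adj_apply_of_adj_iff hf v, fun w => (hf v w).mp⟩
  rw [← coe_edgeFinset, Set.ncard_coe_finset, ← sum_degrees_eq_twice_card_edges]
  simp [hdeg, Nat.card_eq_fintype_card]

theorem two_mul_ncard_le_of_isIndepSet [Finite V] (hf : ∀ a b, G.Adj a b ↔ b = f a)
    {M : Set V} (hM : G.IsIndepSet M) : 2 * M.ncard ≤ Nat.card V := by
  have hdisj : Disjoint M (f '' M) := by
    refine Set.disjoint_left.mpr ?_
    rintro _ ha ⟨b, hb, rfl⟩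
    have hadj := adj_apply_of_adj_iff hf b
    exact hM hb ha hadj.ne hadj
  calc 2 * M.ncard = M.ncard + (f '' M).ncard := by
        rw [Set.ncard_image_of_injective _ (involutive_of_adj_iff hf).injective, two_mul]
    _ = (M ∪ f '' M).ncard := (Set.ncard_union_eq hdisj).symm
    _ ≤ Nat.card V := Set.ncard_le_card _

theorem two_mul_ncard_colorClass_of_adj_iff [Finite V] (hf : ∀ a b, G.Adj a b ↔ b = f a)
    (c : G.Coloring Bool) (b : Bool) : 2 * (c.colorClass b).ncard = Nat.card V := by
  have hinv := involutive_of_adj_iff hf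
  have hswap : f '' c.colorClass b = (c.colorClass b)ᶜ := by
    rw [Set.image_eq_preimage_of_inverse hinv.leftInverse hinv.rightInverse]
    ext a
    have := c.valid (adj_apply_of_adj_iff hf a)
    change c (f a) = b ↔ ¬c a = b
    revert this
    cases c a <;> cases c (f a) <;> cases b <;> decide
  rw [← Set.ncard_add_ncard_compl (c.colorClass b), ← hswap,
    Set.ncard_image_of_injective _ hinv.injective, two_mul]

theorem chromaticNumber_eq_two_of_adj_iff [Nonempty V] (hf : ∀ a b, G.Adj a b ↔ b = f a)
    (c : G.Coloring Bool) : G.chromaticNumber = 2 :=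
  le_antisymm (by simpa using c.colorable.chromaticNumber_le)
    (two_le_chromaticNumber_of_adj (adj_apply_of_adj_iff hf (Classical.arbitrary V)))

end SimpleGraph

section

variable {n : ℕ} {P : Set (Fin n → ℚ)} {r : ℚ}

theorem sum_sq_sub_add_sum_sq_add (x y : Fin n → ℚ) :
    ∑ i, (x i - y i) ^ 2 + ∑ i, (x i + y i) ^ 2 = 2 * ∑ i, x i ^ 2 + 2 * ∑ i, y i ^ 2 := by
  simp only [← Finset.sum_add_distrib, Finset.mul_sum]
  exact Finset.sum_congr rfl fun i _ => by ring

theorem sum_sq_eq_zero_iff {x : Fin n → ℚ} : ∑ i, x i ^ 2 = 0 ↔ x = 0 := by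
  simp only [sq, Finset.sum_mul_self_eq_zero_iff, Finset.mem_univ, true_implies, funext_iff,
    Pi.zero_apply]

theorem distSqGraph_adj_iff_eq_neg (hr : r ≠ 0) (hP : ∀ x ∈ P, ∑ i, x i ^ 2 = r) (a b : P) :
    (distSqGraph P (4 * r)).Adj a b ↔ b.1 = -a.1 := by
  have hpar := sum_sq_sub_add_sum_sq_add a.1 b.1
  rw [hP a a.2, hP b b.2] at hpar
  have hdist : ∑ i, (a.1 i - b.1 i) ^ 2 = 4 * r ↔ b.1 = -a.1 := by
    rw [eq_neg_iff_add_eq_zero, add_comm, ← sum_sq_eq_zero_iff]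
    simp only [Pi.add_apply]
    constructor <;> intro h <;> linarith
  refine ⟨fun h => hdist.mp h.2, fun h => ⟨fun hab => hr ?_, hdist.mpr h⟩⟩
  have ha : a.1 = 0 := by
    rw [← hab] at h
    exact self_eq_neg.mp h
  rw [← hP a a.2, ha]
  simp

open Classical in
/-- Colours a vector by the sign of its first nonzero coordinate, which flips under negation. -/
noncomputable def distSqGraphLexSignColoring (hr : r ≠ 0) (hP : ∀ x ∈ P, ∑ i, x i ^ 2 = r) :
    (distSqGraph P (4 * r)).Coloring Bool :=
  SimpleGraph.Coloring.mk (fun a => decide (0 < toLex a.1)) fun {a b} hab => by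
    have ha : a.1 ≠ 0 := fun h => hr (by rw [← hP a a.2, h]; simp)
    rw [(distSqGraph_adj_iff_eq_neg hr hP a b).mp hab]
    simp only [ne_eq, decide_eq_decide, toLex_neg, neg_pos]
    rcases lt_or_gt_of_ne (show toLex a.1 ≠ 0 from ha) with h | h
    · exact fun hiff => h.not_gt (hiff.mpr h)
    · exact fun hiff => h.not_gt (hiff.mp h)

end

set_option maxRecDepth 10000 in
theorem card_eq_three_of_mem_fano : ∀ A ∈ fano, A.card = 3 := by decide

theorem neg_mem_Tset {x : Fin 7 → ℚ} (hx : x ∈ Tset) : -x ∈ Tset := by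
  obtain ⟨A, hA, hzero, hsign⟩ := hx
  refine ⟨A, hA, fun i hi => by simp [hzero i hi], fun i hi => ?_⟩
  rcases hsign i hi with h | h <;> simp [h]

theorem sum_sq_of_mem_Tset {x : Fin 7 → ℚ} (hx : x ∈ Tset) : ∑ i, x i ^ 2 = 4 := by
  obtain ⟨A, hA, hzero, hsign⟩ := hx
  have hsq : ∀ i, x i ^ 2 = if i ∈ Aᶜ then 1 else 0 := fun i => by
    by_cases hi : i ∈ A
    · simp [hi, hzero i hi]
    · rcases hsign i hi with h | h <;> simp [hi, h]
  rw [Finset.sum_congr rfl fun i _ => hsq i, Finset.sum_ite_mem, Finset.univ_inter,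
    Finset.sum_const, Finset.card_compl, card_eq_three_of_mem_fano A hA]
  norm_num

theorem Tset_eq_biUnion : Tset = ↑(fano.biUnion fun A =>
    Fintype.piFinset fun i => if i ∈ A then ({0} : Finset ℚ) else {1, -1}) := by
  ext x
  simp only [Tset, Finset.coe_biUnion, Finset.mem_coe, Set.mem_iUnion, Fintype.mem_piFinset,
    exists_prop]
  refine exists_congr fun A => and_congr_right fun _ => ⟨fun ⟨hzero, hsign⟩ i => ?_, fun h => ?_⟩
  · by_cases hi : i ∈ A
    · simp [hi, hzero i hi]
    · simpa [hi] using hsign i hi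
  · exact ⟨fun i hi => by simpa [hi] using h i, fun i hi => by simpa [hi] using h i⟩

set_option maxRecDepth 100000 in
theorem ncard_Tset : Tset.ncard = 112 := by
  rw [Tset_eq_biUnion, Set.ncard_coe_finset]
  decide

/-- The graph `K` on `T` (squared distance `16`) has `112` vertices, `56` edges,
independence number `56`, and chromatic number `2`. -/
theorem card_edges_indepNum_chromaticNumber_K :
    Tset.ncard = 112 ∧
    (distSqGraph Tset 16).edgeSet.ncard = 56 ∧
    ((∃ M : Set ↥Tset,
      M.Pairwise (fun a b => ¬ (distSqGraph Tset 16).Adj a b) ∧ M.ncard = 56) ∧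
    ∀ M : Set ↥Tset,
      M.Pairwise (fun a b => ¬ (distSqGraph Tset 16).Adj a b) → M.ncard ≤ 56) ∧
    (distSqGraph Tset 16).chromaticNumber = 2 := by
  rw [show (16 : ℚ) = 4 * 4 by norm_num]
  have hnorm : ∀ x ∈ Tset, ∑ i, x i ^ 2 = 4 := fun _ => sum_sq_of_mem_Tset
  have hK : ∀ a b, (distSqGraph Tset (4 * 4)).Adj a b ↔ b = ⟨-a.1, neg_mem_Tset a.2⟩ :=
    fun a b => by rw [distSqGraph_adj_iff_eq_neg four_ne_zero hnorm, Subtype.ext_iff]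
  have : Finite Tset := (Tset_eq_biUnion ▸ Finset.finite_toSet _).to_subtype
  have hcard : Nat.card Tset = 112 := by rw [Nat.card_coe_set_eq, ncard_Tset]
  have : Nonempty Tset := (Nat.card_pos_iff.mp (by omega)).1
  let c := distSqGraphLexSignColoring four_ne_zero hnorm
  refine ⟨ncard_Tset, ?_, ⟨⟨c.colorClass true, c.isIndepSet_colorClass true, ?_⟩, fun M hM => ?_⟩,
    SimpleGraph.chromaticNumber_eq_two_of_adj_iff hK c⟩
  · have := SimpleGraph.two_mul_ncard_edgeSet_of_adj_iff hK
    omega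
  · have := SimpleGraph.two_mul_ncard_colorClass_of_adj_iff hK c true
    omega
  · have := SimpleGraph.two_mul_ncard_le_of_isIndepSet hK hM
    omega
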